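/- For r = 3, the unique formal series a(z) = 1 + Σ a_k z^{-4k} solving S_z^3 a = (−z)^3 a = −z^3 a has initial coefficients a_1 = −7/12, a_2 = 385/288, a_3 = −39655/10368. -/

import Mathlib

open HahnSeries Pointwise

/-- The operator `S_z = z^{1-r} ∂_z - (r-1)/(2 z^r) - z` acting on formal Laurent
series with finitely many positive powers of `z`, written in the variable
`t = z⁻¹` (so `coeff m` is the coefficient of `z^{-m}`). -/
noncomputable def Sop (r : ℕ) (f : LaurentSeries ℂ) : LaurentSeries ℂ where
  coeff m := ((r + 1 : ℂ) / 2 - m) * f.coeff (m - r) - f.coeff (m + 1)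
  isPWO_support' := by
    have h : (Function.support fun m : ℤ =>
        ((r + 1 : ℂ) / 2 - m) * f.coeff (m - r) - f.coeff (m + 1))
        ⊆ (f.support + {(r : ℤ)}) ∪ (f.support + ({(-1 : ℤ)} : Set ℤ)) := by
      intro m hm
      simp only [Function.mem_support] at hm
      by_cases h1 : f.coeff (m - (r : ℤ)) = 0
      · have h2 : f.coeff (m + 1) ≠ 0 := fun h2 => hm (by rw [h1, h2]; ring)
        right
        exact Set.mem_add.mpr ⟨m + 1, by simpa using h2, -1, rfl, by ring⟩
      · left
        exact Set.mem_add.mpr ⟨m - r, by simpa using h1, r, rfl, by ring⟩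
    exact ((f.isPWO_support.add (Set.isPWO_singleton (r : ℤ))).union
      (f.isPWO_support.add (Set.isPWO_singleton (-1 : ℤ)))).mono h

/-- The formal adjoint `S_z^⋆ = -z^{1-r} ∂_z + (r-1)/(2 z^r) - z`. -/
noncomputable def Sstar (r : ℕ) (f : LaurentSeries ℂ) : LaurentSeries ℂ where
  coeff m := ((m : ℂ) - (r + 1) / 2) * f.coeff (m - r) - f.coeff (m + 1)
  isPWO_support' := by
    have h : (Function.support fun m : ℤ =>
        ((m : ℂ) - (r + 1) / 2) * f.coeff (m - r) - f.coeff (m + 1))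
        ⊆ (f.support + {(r : ℤ)}) ∪ (f.support + ({(-1 : ℤ)} : Set ℤ)) := by
      intro m hm
      simp only [Function.mem_support] at hm
      by_cases h1 : f.coeff (m - (r : ℤ)) = 0
      · have h2 : f.coeff (m + 1) ≠ 0 := fun h2 => hm (by rw [h1, h2]; ring)
        right
        exact Set.mem_add.mpr ⟨m + 1, by simpa using h2, -1, rfl, by ring⟩
      · left
        exact Set.mem_add.mpr ⟨m - r, by simpa using h1, r, rfl, by ring⟩
    exact ((f.isPWO_support.add (Set.isPWO_singleton (r : ℤ))).union
      (f.isPWO_support.add (Set.isPWO_singleton (-1 : ℤ)))).mono h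

/-- Substitution `z ↦ ω z` on a formal Laurent series (`coeff m` is the
coefficient of `z^{-m}`, which gets multiplied by `ω^{-m}`). -/
noncomputable def rot (ω : ℂ) (f : LaurentSeries ℂ) : LaurentSeries ℂ where
  coeff m := ω ^ (-m) * f.coeff m
  isPWO_support' := f.isPWO_support.mono (fun m hm => by
    simp only [Function.mem_support] at hm ⊢
    exact fun h => hm (by rw [h, mul_zero]))

theorem Sop_coeff (r : ℕ) (f : LaurentSeries ℂ) (m : ℤ) :
    (Sop r f).coeff m = ((r + 1 : ℂ) / 2 - m) * f.coeff (m - r) - f.coeff (m + 1) :=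
  rfl

theorem Sop_three_coeff (f : LaurentSeries ℂ) (m : ℤ) :
    (Sop 3 f).coeff m = (2 - m) * f.coeff (m - 3) - f.coeff (m + 1) := by
  rw [Sop_coeff]
  norm_num

theorem Sop_three_iterate_three_coeff (f : LaurentSeries ℂ) (m : ℤ) :
    ((Sop 3)^[3] f).coeff m = (2 - m) * (5 - m) * (8 - m) * f.coeff (m - 9)
      + (-3 * m ^ 2 + 18 * m - 22) * f.coeff (m - 5) + (3 - 3 * m) * f.coeff (m - 1)
      - f.coeff (m + 3) := by
  simp only [Function.iterate_succ_apply', Function.iterate_zero_apply, Sop_three_coeff]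
  rw [show m - 3 - 3 - 3 = m - 9 by ring, show m - 3 - 3 + 1 = m - 5 by ring,
    show m - 3 + 1 - 3 = m - 5 by ring, show m - 3 + 1 + 1 = m - 1 by ring,
    show m + 1 - 3 - 3 = m - 5 by ring, show m + 1 - 3 + 1 = m - 1 by ring,
    show m + 1 + 1 - 3 = m - 1 by ring, show m + 1 + 1 + 1 = m + 3 by ring]
  push_cast
  ring

theorem coeff_recurrence_of_Sop_three_iterate_eq {a : LaurentSeries ℂ}
    (hode : (Sop 3)^[3] a = -(single (-3 : ℤ) 1 * a)) (m : ℤ) :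
    (2 - m) * (5 - m) * (8 - m) * a.coeff (m - 9)
      + (-3 * m ^ 2 + 18 * m - 22) * a.coeff (m - 5) + (3 - 3 * m) * a.coeff (m - 1) = 0 := by
  have h := congrArg (fun f : LaurentSeries ℂ => f.coeff m) hode
  simp only [Sop_three_iterate_three_coeff, coeff_neg, coeff_single_mul, one_mul,
    sub_neg_eq_add] at h
  linear_combination h

theorem a_coeffs_r_three_general (a : LaurentSeries ℂ)
    (ha0 : a.coeff 0 = 1)
    (hode : (Sop 3)^[3] a = -(HahnSeries.single (-3 : ℤ) 1 * a)) :
    a.coeff 4 = -7/12 ∧ a.coeff 8 = 385/288 ∧ a.coeff 12 = -39655/10368 := by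
  -- Each step solves for `a_{m-1}`; at `m = 5` the factor `5 - m` removes `a_{-4}`.
  have h5 := coeff_recurrence_of_Sop_three_iterate_eq hode 5
  have h9 := coeff_recurrence_of_Sop_three_iterate_eq hode 9
  have h13 := coeff_recurrence_of_Sop_three_iterate_eq hode 13
  norm_num [ha0] at h5 h9 h13
  have ha4 : a.coeff 4 = -7/12 := by linear_combination (-1/12 : ℂ) * h5
  have ha8 : a.coeff 8 = 385/288 := by
    rw [ha4] at h9
    linear_combination (-1/24 : ℂ) * h9
  have ha12 : a.coeff 12 = -39655/10368 := by
    rw [ha4, ha8] at h13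
    linear_combination (-1/36 : ℂ) * h13
  exact ⟨ha4, ha8, ha12⟩

/-- For `r = 3`: the unique formal series `a(z) = 1 + Σ a_k z^{-4k}` solving
`S_z^3 a = (-z)^3 a = -z^3 a` has `a_1 = -7/12`, `a_2 = 385/288`, `a_3 = -39655/10368`. -/
theorem a_coeffs_r_three (a : LaurentSeries ℂ)
    (ha0 : a.coeff 0 = 1)
    (hsupp : ∀ m : ℤ, a.coeff m ≠ 0 → ∃ k : ℕ, m = 4 * k)
    (hode : (Sop 3)^[3] a = -(HahnSeries.single (-3 : ℤ) 1 * a)) :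
    a.coeff 4 = -7/12 ∧ a.coeff 8 = 385/288 ∧ a.coeff 12 = -39655/10368 :=
  a_coeffs_r_three_general a ha0 hode
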